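/- (Equal glue levels within an epoch; energy maximization.) Let (β,Θ) be an optimal policy for the energy maximization problem. Then within any epoch i, the glue levels are equal across all sub-channels with non-zero transmission: if β_{i,k} > 0, Θ_{i,k} > 0, β_{i,k'} > 0, Θ_{i,k'} > 0, then 1/γ_{i,k} + (e^{2β_{i,k}/Θ_{i,k}} − 1)/γ_{i,k} = 1/γ_{i,k'} + (e^{2β_{i,k'}/Θ_{i,k'}} − 1)/γ_{i,k'}. -/

import Mathlib

/-- Energy consumed in one epoch on one sub-channel with gain `γ`, processing cost `ε`,
duration `θ` and delivered data `β`: `(θ/γ)(e^{2β/θ} − 1) + θ ε`, taken to be `0`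
when `θ = 0`. -/
noncomputable def EpochEnergy (γ ε θ β : ℝ) : ℝ :=
  if θ = 0 then 0 else θ / γ * (Real.exp (2 * β / θ) - 1) + θ * ε

/-- Feasibility of an energy-maximization policy `(β, Θ)` (data amounts and durations,
indexed by epoch `i ∈ {1,…,I}` and sub-channel `k ∈ {1,…,K}`): nonnegativity,
`Θ i k ≤ τ i`, `β i k = 0` whenever `Θ i k = 0`, the energy causality constraints,
the data causality constraints, and delivery of all data by the deadline. -/
def EnergyFeasible (I K : ℕ) (τ : ℕ → ℝ) (γ : ℕ → ℕ → ℝ) (E B : ℕ → ℝ) (ε : ℝ)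
    (β Θ : ℕ → ℕ → ℝ) : Prop :=
  (∀ i ∈ Finset.Icc 1 I, ∀ k ∈ Finset.Icc 1 K,
      0 ≤ β i k ∧ 0 ≤ Θ i k ∧ Θ i k ≤ τ i ∧ (Θ i k = 0 → β i k = 0)) ∧
  (∀ i ∈ Finset.Icc 1 I,
      ∑ j ∈ Finset.Icc 1 i, ∑ k ∈ Finset.Icc 1 K, EpochEnergy (γ j k) ε (Θ j k) (β j k)
        ≤ ∑ j ∈ Finset.Icc 1 i, E j) ∧
  (∀ i ∈ Finset.Icc 1 (I - 1),
      ∑ j ∈ Finset.Icc 1 i, ∑ k ∈ Finset.Icc 1 K, β j k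
        ≤ ∑ j ∈ Finset.Icc 1 i, B j) ∧
  (∑ j ∈ Finset.Icc 1 I, B j ≤ ∑ j ∈ Finset.Icc 1 I, ∑ k ∈ Finset.Icc 1 K, β j k)

/-- Total energy consumed by a policy `(β, Θ)`. -/
noncomputable def TotalEnergy (I K : ℕ) (γ : ℕ → ℕ → ℝ) (ε : ℝ)
    (β Θ : ℕ → ℕ → ℝ) : ℝ :=
  ∑ i ∈ Finset.Icc 1 I, ∑ k ∈ Finset.Icc 1 K, EpochEnergy (γ i k) ε (Θ i k) (β i k)

/-- A policy is optimal for the energy maximization problem if it is feasible and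
minimizes the total consumed energy (equivalently, maximizes the remaining energy)
among feasible policies. -/
def EnergyOptimal (I K : ℕ) (τ : ℕ → ℝ) (γ : ℕ → ℕ → ℝ) (E B : ℕ → ℝ) (ε : ℝ)
    (β Θ : ℕ → ℕ → ℝ) : Prop :=
  EnergyFeasible I K τ γ E B ε β Θ ∧
  ∀ β' Θ' : ℕ → ℕ → ℝ, EnergyFeasible I K τ γ E B ε β' Θ' →
    TotalEnergy I K γ ε β Θ ≤ TotalEnergy I K γ ε β' Θ'

lemma exp_sub_one_lt_mul (x : ℝ) (hx : 0 < x) :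
    Real.exp x - 1 < x * Real.exp x := by
  have h := Real.add_one_lt_exp (x := -x) (by linarith)
  nlinarith [mul_lt_mul_of_pos_right h (Real.exp_pos x),
    (by rw [← Real.exp_add]; simp : Real.exp (-x) * Real.exp x = 1)]

lemma exp_neg_sub_one_le_mul (y : ℝ) :
    Real.exp (-y) - 1 ≤ -y * Real.exp (-y) := by
  have h := Real.add_one_le_exp y
  nlinarith [mul_le_mul_of_nonneg_right h (Real.exp_pos (-y)).le,
    (by rw [← Real.exp_add]; simp : Real.exp y * Real.exp (-y) = 1)]

set_option maxHeartbeats 1600000 in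
lemma energy_aux (I K : ℕ) (τ : ℕ → ℝ) (γ : ℕ → ℕ → ℝ) (E B : ℕ → ℝ) (ε : ℝ)
    (β Θ : ℕ → ℕ → ℝ) (hopt : EnergyOptimal I K τ γ E B ε β Θ)
    (i k k' : ℕ) (hi : i ∈ Finset.Icc 1 I)
    (hk : k ∈ Finset.Icc 1 K) (hk' : k' ∈ Finset.Icc 1 K)
    (hγk : 0 < γ i k) (hγk' : 0 < γ i k')
    (hβ' : 0 < β i k') (hΘ : 0 < Θ i k) (hΘ' : 0 < Θ i k')
    (hlt : Real.exp (2 * β i k / Θ i k) / γ i k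
         < Real.exp (2 * β i k' / Θ i k') / γ i k') : False := by
  have hne : k ≠ k' := by rintro rfl; exact lt_irrefl _ hlt
  set a := Real.exp (2 * β i k / Θ i k) / γ i k with ha_def
  set a' := Real.exp (2 * β i k' / Θ i k') / γ i k' with ha'_def
  have ha : 0 < a := by rw [ha_def]; positivity
  have ha' : 0 < a' := lt_trans ha hlt
  set c := (a + a') / 2 with hc_def
  have hac : a < c := by rw [hc_def]; linarith
  have hca' : c < a' := by rw [hc_def]; linarith
  have hc : 0 < c := lt_trans ha hac
  have hlog1 : 0 < Real.log (c / a) := Real.log_pos (by rw [lt_div_iff₀ ha]; linarith)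
  have hlog2 : 0 < Real.log (a' / c) := Real.log_pos (by rw [lt_div_iff₀ hc]; linarith)
  set δ := min (min (Θ i k * Real.log (c / a) / 2) (Θ i k' * Real.log (a' / c) / 2))
      (β i k') with hδ_def
  have hδpos : 0 < δ := lt_min (lt_min (by positivity) (by positivity)) hβ'
  have hδβ : δ ≤ β i k' := min_le_right _ _
  have hδ1 : 2 * δ / Θ i k ≤ Real.log (c / a) := by
    have h : δ ≤ Θ i k * Real.log (c / a) / 2 := le_trans (min_le_left _ _) (min_le_left _ _)
    rw [div_le_iff₀ hΘ]; nlinarith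
  have hδ2 : 2 * δ / Θ i k' ≤ Real.log (a' / c) := by
    have h : δ ≤ Θ i k' * Real.log (a' / c) / 2 := le_trans (min_le_left _ _) (min_le_right _ _)
    rw [div_le_iff₀ hΘ']; nlinarith
  have hexp1 : Real.exp (2 * δ / Θ i k) ≤ c / a := by
    calc Real.exp (2 * δ / Θ i k) ≤ Real.exp (Real.log (c / a)) := Real.exp_le_exp.2 hδ1
    _ = c / a := Real.exp_log (by positivity)
  have hexp2 : c / a' ≤ Real.exp (-(2 * δ / Θ i k')) := by
    have hlogle : Real.log (c / a') ≤ -(2 * δ / Θ i k') := by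
      have h1 : Real.log (c / a') = -Real.log (a' / c) := by
        rw [← Real.log_inv, inv_div]
      rw [h1]; linarith
    calc c / a' = Real.exp (Real.log (c / a')) := (Real.exp_log (by positivity)).symm
    _ ≤ Real.exp (-(2 * δ / Θ i k')) := Real.exp_le_exp.2 hlogle
  set Dk := Θ i k * a * (Real.exp (2 * δ / Θ i k) - 1) with hDk_def
  set Dk' := Θ i k' * a' * (Real.exp (-(2 * δ / Θ i k')) - 1) with hDk'_def
  -- Dk < 2δc
  have hd1 : Dk < 2 * δ * c := by
    have h1 := exp_sub_one_lt_mul (2 * δ / Θ i k) (by positivity)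
    have step1 : Dk < Θ i k * a * (2 * δ / Θ i k * Real.exp (2 * δ / Θ i k)) := by
      rw [hDk_def]; exact mul_lt_mul_of_pos_left h1 (by positivity)
    have step2 : Θ i k * a * (2 * δ / Θ i k * Real.exp (2 * δ / Θ i k))
        = 2 * δ * (a * Real.exp (2 * δ / Θ i k)) := by
      field_simp
    have step3 : a * Real.exp (2 * δ / Θ i k) ≤ c := by
      have h := mul_le_mul_of_nonneg_left hexp1 ha.le
      have hca : a * (c / a) = c := by field_simp
      linarith [hca ▸ h]
    nlinarith
  have hd2 : Dk' ≤ -(2 * δ * c) := by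
    have h1 := exp_neg_sub_one_le_mul (2 * δ / Θ i k')
    have step1 : Dk' ≤ Θ i k' * a' * (-(2 * δ / Θ i k') * Real.exp (-(2 * δ / Θ i k'))) := by
      rw [hDk'_def]; exact mul_le_mul_of_nonneg_left h1 (by positivity)
    have step2 : Θ i k' * a' * (-(2 * δ / Θ i k') * Real.exp (-(2 * δ / Θ i k')))
        = -(2 * δ * (a' * Real.exp (-(2 * δ / Θ i k')))) := by
      field_simp
    have step3 : c ≤ a' * Real.exp (-(2 * δ / Θ i k')) := by
      have h := mul_le_mul_of_nonneg_left hexp2 ha'.le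
      have hca : a' * (c / a') = c := by field_simp
      linarith [hca ▸ h]
    nlinarith
  have hΔ : Dk + Dk' < 0 := by linarith
  have hEk : EpochEnergy (γ i k) ε (Θ i k) (β i k + δ)
      = EpochEnergy (γ i k) ε (Θ i k) (β i k) + Dk := by
    rw [hDk_def, ha_def]
    unfold EpochEnergy
    rw [if_neg hΘ.ne', if_neg hΘ.ne']
    have hsplit : 2 * (β i k + δ) / Θ i k = 2 * β i k / Θ i k + 2 * δ / Θ i k := by
      ring
    rw [hsplit, Real.exp_add]
    ring
  have hEk' : EpochEnergy (γ i k') ε (Θ i k') (β i k' - δ)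
      = EpochEnergy (γ i k') ε (Θ i k') (β i k') + Dk' := by
    rw [hDk'_def, ha'_def]
    unfold EpochEnergy
    rw [if_neg hΘ'.ne', if_neg hΘ'.ne']
    have hsplit : 2 * (β i k' - δ) / Θ i k' = 2 * β i k' / Θ i k' + -(2 * δ / Θ i k') := by
      ring
    rw [hsplit, Real.exp_add]
    ring
  clear_value a a' c δ Dk Dk'
  -- the perturbed policy
  set β2 : ℕ → ℕ → ℝ := fun j l =>
    if j = i ∧ l = k then β j l + δ else if j = i ∧ l = k' then β j l - δ else β j l
    with hβ2_def
  have hβ2eq : ∀ j l, β2 j l = β j l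
      + ((if j = i ∧ l = k then δ else 0) + (if j = i ∧ l = k' then -δ else 0)) := by
    intro j l
    by_cases h1 : j = i ∧ l = k
    · have h2 : ¬(j = i ∧ l = k') := fun h => hne (h1.2.symm.trans h.2)
      simp only [hβ2_def, if_pos h1, if_neg h2]; ring
    · by_cases h2 : j = i ∧ l = k'
      · simp only [hβ2_def, if_neg h1, if_pos h2]; ring
      · simp only [hβ2_def, if_neg h1, if_neg h2]; ring
  have hsumβ : ∀ j, ∑ l ∈ Finset.Icc 1 K, β2 j l = ∑ l ∈ Finset.Icc 1 K, β j l := by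
    intro j
    by_cases hj : j = i
    · subst hj
      simp only [hβ2eq]
      simp [Finset.sum_add_distrib, Finset.sum_ite_eq', hk, hk']
    · simp only [hβ2eq]
      simp [hj]
  have hE2eq : ∀ j l, EpochEnergy (γ j l) ε (Θ j l) (β2 j l)
      = EpochEnergy (γ j l) ε (Θ j l) (β j l)
        + ((if j = i ∧ l = k then Dk else 0) + (if j = i ∧ l = k' then Dk' else 0)) := by
    intro j l
    by_cases h1 : j = i ∧ l = k
    · have h2 : ¬(j = i ∧ l = k') := fun h => hne (h1.2.symm.trans h.2)
      have hb : β2 j l = β j l + δ := by simp only [hβ2_def]; rw [if_pos h1]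
      rw [hb, if_pos h1, if_neg h2, h1.1, h1.2, hEk]; ring
    · by_cases h2 : j = i ∧ l = k'
      · have hb : β2 j l = β j l - δ := by simp only [hβ2_def]; rw [if_neg h1, if_pos h2]
        rw [hb, if_neg h1, if_pos h2, h2.1, h2.2, hEk']; ring
      · have hb : β2 j l = β j l := by simp only [hβ2_def]; rw [if_neg h1, if_neg h2]
        rw [hb, if_neg h1, if_neg h2]; ring
  have hsumE : ∀ j, ∑ l ∈ Finset.Icc 1 K, EpochEnergy (γ j l) ε (Θ j l) (β2 j l)
      = (∑ l ∈ Finset.Icc 1 K, EpochEnergy (γ j l) ε (Θ j l) (β j l))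
        + (if j = i then Dk + Dk' else 0) := by
    intro j
    by_cases hj : j = i
    · subst hj
      simp only [hE2eq]
      simp [Finset.sum_add_distrib, Finset.sum_ite_eq', hk, hk']
    · simp only [hE2eq]
      simp [hj]
  have hpart : ∀ m, ∑ j ∈ Finset.Icc 1 m, ∑ l ∈ Finset.Icc 1 K,
        EpochEnergy (γ j l) ε (Θ j l) (β2 j l)
      = (∑ j ∈ Finset.Icc 1 m, ∑ l ∈ Finset.Icc 1 K, EpochEnergy (γ j l) ε (Θ j l) (β j l))
        + (if i ∈ Finset.Icc 1 m then Dk + Dk' else 0) := by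
    intro m
    simp only [hsumE]
    rw [Finset.sum_add_distrib, Finset.sum_ite_eq']
  obtain ⟨hposc, hEc, hDc, hDel⟩ := hopt.1
  have hfeas2 : EnergyFeasible I K τ γ E B ε β2 Θ := by
    refine ⟨?_, ?_, ?_, ?_⟩
    · intro j hj l hl
      obtain ⟨hb0, ht0, htτ, htz⟩ := hposc j hj l hl
      refine ⟨?_, ht0, htτ, ?_⟩
      · by_cases h1 : j = i ∧ l = k
        · simp only [hβ2_def, if_pos h1]; linarith
        · by_cases h2 : j = i ∧ l = k'
          · have hb : β2 j l = β j l - δ := by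
              simp only [hβ2_def]; rw [if_neg h1, if_pos h2]
            rw [hb, h2.1, h2.2]; linarith
          · simp only [hβ2_def, if_neg h1, if_neg h2]; exact hb0
      · intro htz0
        by_cases h1 : j = i ∧ l = k
        · exact absurd (h1.1 ▸ h1.2 ▸ htz0) hΘ.ne'
        · by_cases h2 : j = i ∧ l = k'
          · exact absurd (h2.1 ▸ h2.2 ▸ htz0) hΘ'.ne'
          · simp only [hβ2_def, if_neg h1, if_neg h2]; exact htz htz0
    · intro m hm
      rw [hpart m]
      have h := hEc m hm
      split_ifs with h'
      · linarith only [h, hΔ]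
      · linarith only [h]
    · intro m hm
      have h : ∑ j ∈ Finset.Icc 1 m, ∑ l ∈ Finset.Icc 1 K, β2 j l
          = ∑ j ∈ Finset.Icc 1 m, ∑ l ∈ Finset.Icc 1 K, β j l :=
        Finset.sum_congr rfl (fun j _ => hsumβ j)
      rw [h]; exact hDc m hm
    · have h : ∑ j ∈ Finset.Icc 1 I, ∑ l ∈ Finset.Icc 1 K, β2 j l
          = ∑ j ∈ Finset.Icc 1 I, ∑ l ∈ Finset.Icc 1 K, β j l :=
        Finset.sum_congr rfl (fun j _ => hsumβ j)
      rw [h]; exact hDel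
  have hle := hopt.2 β2 Θ hfeas2
  simp only [TotalEnergy] at hle
  rw [hpart I, if_pos hi] at hle
  linarith only [hle, hΔ]

/-- Equal glue levels within an epoch (energy maximization): in an optimal policy, the
glue levels are equal across all sub-channels with non-zero transmission. -/
theorem energy_glue_levels_equal_within_epoch (I K : ℕ) (hI : 1 ≤ I) (hK : 1 ≤ K)
    (τ : ℕ → ℝ) (hτ : ∀ i ∈ Finset.Icc 1 I, 0 < τ i)
    (γ : ℕ → ℕ → ℝ) (hγ : ∀ i ∈ Finset.Icc 1 I, ∀ k ∈ Finset.Icc 1 K, 0 < γ i k)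
    (E : ℕ → ℝ) (hE : ∀ i ∈ Finset.Icc 1 I, 0 ≤ E i)
    (B : ℕ → ℝ) (hB : ∀ i ∈ Finset.Icc 1 I, 0 ≤ B i)
    (ε : ℝ) (hε : 0 < ε)
    (β Θ : ℕ → ℕ → ℝ) (hopt : EnergyOptimal I K τ γ E B ε β Θ)
    (i k k' : ℕ) (hi : i ∈ Finset.Icc 1 I)
    (hk : k ∈ Finset.Icc 1 K) (hk' : k' ∈ Finset.Icc 1 K)
    (hβ : 0 < β i k) (hΘ : 0 < Θ i k)
    (hβ' : 0 < β i k') (hΘ' : 0 < Θ i k') :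
    1 / γ i k + (Real.exp (2 * β i k / Θ i k) - 1) / γ i k
      = 1 / γ i k' + (Real.exp (2 * β i k' / Θ i k') - 1) / γ i k' := by
  have hγ1 := hγ i hi k hk
  have hγ2 := hγ i hi k' hk'
  have h1 : ¬ (Real.exp (2 * β i k / Θ i k) / γ i k
      < Real.exp (2 * β i k' / Θ i k') / γ i k') :=
    fun h => energy_aux I K τ γ E B ε β Θ hopt i k k' hi hk hk' hγ1 hγ2 hβ' hΘ hΘ' h
  have h2 : ¬ (Real.exp (2 * β i k' / Θ i k') / γ i k'
      < Real.exp (2 * β i k / Θ i k) / γ i k) :=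
    fun h => energy_aux I K τ γ E B ε β Θ hopt i k' k hi hk' hk hγ2 hγ1 hβ hΘ' hΘ h
  have key : Real.exp (2 * β i k / Θ i k) / γ i k
      = Real.exp (2 * β i k' / Θ i k') / γ i k' :=
    le_antisymm (not_lt.1 h2) (not_lt.1 h1)
  have hg : ∀ g e : ℝ, g ≠ 0 → 1 / g + (e - 1) / g = e / g := by
    intro g e hg0; field_simp; ring
  rw [hg _ _ hγ1.ne', hg _ _ hγ2.ne']
  exact key
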